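/- arXiv:2006.10095 — 5 statements merged into one kernel-verified Lean document; each statement's English description precedes it below -/
import Mathlib

section
/- Let X₁, ..., X_n be i.i.d. real random variables with mean μ and variance σ². Partition them into k = 8·log(1/δ) groups of size m = n/(8·log(1/δ)), compute the group means μ̄₁, ..., μ̄_k, and let μ̄ be their median. Then with probability at least 1 − δ, (μ̄ − μ)² ≤ 32 σ² log(1/δ) / n. -/
/-!
Each group mean has variance `σ² / m`, so by Chebyshev it misses `μ` by more than `2σ / √m` with
probability at most `1/4`, independently across the groups. If the median misses `μ` by that much,
so does every group mean on the far side of the median, hence at least half of them; by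
Hoeffding's inequality for the `k` independent indicators of these events this has probability
at most `exp (-2 (k/4)² / k) = exp (-k/8) = δ`.
-/

open MeasureTheory ProbabilityTheory Finset

lemma half_le_card_lt_sq_sub_of_median {ι : Type*} [Fintype ι] {y : ι → ℝ} {med c ε : ℝ}
    (hle : (Fintype.card ι : ℝ) / 2 ≤ #{i | y i ≤ med})
    (hge : (Fintype.card ι : ℝ) / 2 ≤ #{i | med ≤ y i}) (hfar : ε < (med - c) ^ 2) :
    (Fintype.card ι : ℝ) / 2 ≤ #{i | ε < (y i - c) ^ 2} := by
  rcases le_total c med with hc | hc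
  · refine hge.trans (mod_cast card_le_card (monotone_filter_right _ fun i _ hi ↦ ?_))
    nlinarith [show med ≤ y i from hi]
  · refine hle.trans (mod_cast card_le_card (monotone_filter_right _ fun i _ hi ↦ ?_))
    nlinarith [show y i ≤ med from hi]

namespace ProbabilityTheory

variable {Ω : Type*} {mΩ : MeasurableSpace Ω} {P : Measure Ω}

lemma iIndepFun.curry [IsProbabilityMeasure P] {ι κ 𝓧 : Type*} [MeasurableSpace 𝓧]
    {X : ι × κ → Ω → 𝓧} (hX : ∀ p, Measurable (X p)) (h : iIndepFun X P) :
    iIndepFun (fun i ω j ↦ X (i, j) ω) P := by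
  have (p : ι × κ) := Measure.isProbabilityMeasure_map (μ := P) (hX p).aemeasurable
  have hcurry : (fun ω i j ↦ X (i, j) ω) = MeasurableEquiv.curry ι κ 𝓧 ∘ fun ω p ↦ X p ω := rfl
  rw [iIndepFun_iff_map_fun_eq_infinitePi_map (fun i ↦ by fun_prop), hcurry,
    ← Measure.map_map (by fun_prop) (by fun_prop), h.map_fun_eq_infinitePi_map hX,
    Measure.infinitePi_map_curry (fun i j ↦ P.map (X (i, j)))]
  congr with i : 1
  exact ((h.precomp (Prod.mk_right_injective i)).map_fun_eq_infinitePi_map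
    fun j ↦ hX (i, j)).symm

lemma measure_mul_variance_lt_sq_sub_le [IsFiniteMeasure P] {X : Ω → ℝ} (hX : MemLp X 2 P)
    {c : ℝ} (hc : 0 < c) :
    P {ω | c * variance X P < (X ω - P[X]) ^ 2} ≤ ENNReal.ofReal (1 / c) := by
  rcases (variance_nonneg X P).eq_or_lt with hvar | hvar
  · have hconst : X =ᵐ[P] fun _ ↦ P[X] := by
      rw [← evariance_eq_zero_iff hX.aemeasurable, ← hX.ofReal_variance_eq, ← hvar,
        ENNReal.ofReal_zero]
    have hnull : P {ω | c * variance X P < (X ω - P[X]) ^ 2} = 0 := by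
      refine measure_mono_null (fun ω hω ↦ ?_) (ae_iff.1 hconst)
      intro hXω
      simp [← hvar, hXω] at hω
    simp [hnull]
  · calc P {ω | c * variance X P < (X ω - P[X]) ^ 2}
        ≤ P {ω | √(c * variance X P) ≤ |X ω - P[X]|} := measure_mono fun ω hω ↦
          (Real.sqrt_le_sqrt hω.le).trans_eq (Real.sqrt_sq_eq_abs _)
      _ ≤ ENNReal.ofReal (variance X P / √(c * variance X P) ^ 2) :=
          meas_ge_le_variance_div_sq hX (by positivity)
      _ = ENNReal.ofReal (1 / c) := by
          rw [Real.sq_sqrt (by positivity)]; field_simp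

open scoped Classical in
lemma measureReal_half_le_card_mem_le_exp [IsProbabilityMeasure P] {ι : Type*} [Fintype ι]
    {A : ι → Set Ω} (hA : ∀ i, MeasurableSet (A i))
    (hindep : iIndepFun (fun i ↦ (A i).indicator (1 : Ω → ℝ)) P)
    (hprob : ∀ i, P.real (A i) ≤ 1 / 4) :
    P.real {ω | (Fintype.card ι : ℝ) / 2 ≤ #{i | ω ∈ A i}}
      ≤ Real.exp (-(Fintype.card ι : ℝ) / 8) := by
  set n : ℝ := (Fintype.card ι : ℝ)
  have hcentered : iIndepFun (fun i ω ↦ (A i).indicator 1 ω - P.real (A i)) P :=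
    hindep.comp (fun i x ↦ x - P.real (A i)) fun i ↦ measurable_id.sub_const _
  have hsubG (i : ι) :
      HasSubgaussianMGF (fun ω ↦ (A i).indicator 1 ω - P.real (A i)) (1 / 4) P := by
    have := hasSubgaussianMGF_of_mem_Icc (X := (A i).indicator (1 : Ω → ℝ)) (μ := P)
      (a := 0) (b := 1) (measurable_const.indicator (hA i)).aemeasurable
      (ae_of_all _ fun ω ↦ by by_cases h : ω ∈ A i <;> simp [h])
    convert this using 1
    · simp [integral_indicator_one (hA i)]
    · norm_num
  have hsum_le : ∑ i, P.real (A i) ≤ n / 4 := by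
    calc ∑ i, P.real (A i) ≤ ∑ _i : ι, (1 / 4 : ℝ) := Finset.sum_le_sum fun i _ ↦ hprob i
      _ = n / 4 := by simp [n]; ring
  calc P.real {ω | n / 2 ≤ #{i | ω ∈ A i}}
      ≤ P.real {ω | n / 4 ≤ ∑ i, ((A i).indicator 1 ω - P.real (A i))} := by
        refine measureReal_mono fun ω hω ↦ ?_
        simp only [Set.mem_ofPred_eq, Finset.sum_sub_distrib, Set.indicator_apply, Pi.one_apply,
          Finset.sum_boole] at hω ⊢
        linarith
    _ ≤ Real.exp (-(n / 4) ^ 2 / (2 * ↑(∑ _i : ι, (1 / 4 : NNReal)))) :=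
        HasSubgaussianMGF.measure_sum_ge_le_of_iIndepFun hcentered (fun i _ ↦ hsubG i)
          (by positivity)
    _ = Real.exp (-n / 8) := by
        rcases eq_or_ne n 0 with hn | hn
        · simp [hn]
        · congr 1
          simp only [n, sum_const, card_univ, nsmul_eq_mul, NNReal.coe_mul, NNReal.coe_natCast,
            NNReal.coe_div, NNReal.coe_one, NNReal.coe_ofNat]
          field_simp
          ring

theorem measure_lt_sq_median_sub_le [IsProbabilityMeasure P] {ι : Type*} [Fintype ι]
    {Y : ι → Ω → ℝ} (hmeas : ∀ i, Measurable (Y i)) (hindep : iIndepFun Y P)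
    (hL2 : ∀ i, MemLp (Y i) 2 P) {μ v : ℝ} (hmean : ∀ i, P[Y i] = μ)
    (hvar : ∀ i, variance (Y i) P = v) {med : Ω → ℝ}
    (hmed : ∀ ω, (Fintype.card ι : ℝ) / 2 ≤ #{i | Y i ω ≤ med ω} ∧
      (Fintype.card ι : ℝ) / 2 ≤ #{i | med ω ≤ Y i ω}) :
    P {ω | 4 * v < (med ω - μ) ^ 2} ≤ ENNReal.ofReal (Real.exp (-(Fintype.card ι : ℝ) / 8)) := by
  classical
  set B : Set ℝ := {x | 4 * v < (x - μ) ^ 2}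
  have hB : MeasurableSet B := measurableSet_lt measurable_const (by fun_prop)
  have hA (i : ι) : MeasurableSet (Y i ⁻¹' B) := hmeas i hB
  have hAindep : iIndepFun (fun i ↦ (Y i ⁻¹' B).indicator (1 : Ω → ℝ)) P :=
    hindep.comp (fun _ ↦ B.indicator 1) fun _ ↦ measurable_one.indicator hB
  have hprob (i : ι) : P.real (Y i ⁻¹' B) ≤ 1 / 4 := by
    have := measure_mul_variance_lt_sq_sub_le (hL2 i) four_pos
    rw [hmean, hvar] at this
    exact ENNReal.toReal_le_of_le_ofReal (by norm_num) this
  calc P {ω | 4 * v < (med ω - μ) ^ 2}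
      ≤ P {ω | (Fintype.card ι : ℝ) / 2 ≤ #{i | ω ∈ Y i ⁻¹' B}} := measure_mono fun ω hω ↦ by
        simpa [B] using half_le_card_lt_sq_sub_of_median (hmed ω).1 (hmed ω).2 hω
    _ = ENNReal.ofReal (P.real {ω | (Fintype.card ι : ℝ) / 2 ≤ #{i | ω ∈ Y i ⁻¹' B}}) :=
        (ofReal_measureReal).symm
    _ ≤ ENNReal.ofReal (Real.exp (-(Fintype.card ι : ℝ) / 8)) :=
        ENNReal.ofReal_le_ofReal (measureReal_half_le_card_mem_le_exp hA hAindep hprob)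

lemma integral_inv_card_mul_sum_eq {κ : Type*} [Fintype κ] [Nonempty κ] {X : κ → Ω → ℝ}
    (hint : ∀ i, Integrable (X i) P) {μ : ℝ} (hmean : ∀ i, P[X i] = μ) :
    ∫ ω, (Fintype.card κ : ℝ)⁻¹ * ∑ i, X i ω ∂P = μ := by
  rw [integral_const_mul, integral_finsetSum _ fun i _ ↦ hint i]
  simp [hmean]

lemma variance_inv_card_mul_sum_eq {κ : Type*} [Fintype κ] {X : κ → Ω → ℝ}
    (hL2 : ∀ i, MemLp (X i) 2 P) (hindep : Pairwise fun i j ↦ X i ⟂ᵢ[P] X j) {v : ℝ}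
    (hvar : ∀ i, variance (X i) P = v) :
    variance (fun ω ↦ (Fintype.card κ : ℝ)⁻¹ * ∑ i, X i ω) P = v / Fintype.card κ := by
  have hsum : variance (∑ i, X i) P = Fintype.card κ * v := by
    rw [IndepFun.variance_sum (fun i _ ↦ hL2 i) fun i _ j _ hij ↦ hindep hij]
    simp [hvar]
  simp_rw [← Finset.sum_apply]
  rw [variance_const_mul, hsum]
  rcases eq_or_ne (Fintype.card κ : ℝ) 0 with h | h
  · simp [h]
  · field_simp

lemma ofReal_one_sub_le_measure_of_measure_compl_le [IsProbabilityMeasure P] {s : Set Ω}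
    {δ : ℝ} (hδ : 0 ≤ δ) (h : P sᶜ ≤ ENNReal.ofReal δ) : ENNReal.ofReal (1 - δ) ≤ P s := by
  rw [ENNReal.ofReal_sub _ hδ, ENNReal.ofReal_one, tsub_le_iff_right, ← measure_univ (μ := P)]
  exact (measure_univ_le_add_compl s).trans (add_le_add_right h _)

end ProbabilityTheory

theorem median_of_means_general
    {Ω : Type*} [MeasureSpace Ω] [IsProbabilityMeasure (ℙ : Measure Ω)]
    (k m n : ℕ) (hk : 0 < k) (hm : 0 < m) (hn : n = k * m)
    (δ : ℝ) (hδ : δ ∈ Set.Ioo (0 : ℝ) 1) (hkδ : (k : ℝ) = 8 * Real.log (1 / δ))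
    (X : Fin k × Fin m → Ω → ℝ) (μ σ : ℝ)
    (hmeas : ∀ i, Measurable (X i))
    (hindep : iIndepFun X ℙ)
    (hL2 : ∀ i, MemLp (X i) 2 ℙ)
    (hmean : ∀ i, ∫ ω, X i ω ∂ℙ = μ)
    (hvar : ∀ i, variance (X i) ℙ = σ ^ 2)
    -- the group means
    (Y : Fin k → Ω → ℝ) (hY : ∀ j ω, Y j ω = (m : ℝ)⁻¹ * ∑ i : Fin m, X (j, i) ω)
    -- `med` is a median of the group means
    (med : Ω → ℝ)
    (hmed : ∀ ω, (k : ℝ) / 2 ≤ (Finset.univ.filter fun j => Y j ω ≤ med ω).card ∧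
                 (k : ℝ) / 2 ≤ (Finset.univ.filter fun j => med ω ≤ Y j ω).card) :
    ENNReal.ofReal (1 - δ) ≤
      ℙ {ω | (med ω - μ) ^ 2 ≤ 32 * σ ^ 2 * Real.log (1 / δ) / n} := by
  have : Nonempty (Fin m) := ⟨⟨0, hm⟩⟩
  obtain rfl : Y = fun j ω ↦ (m : ℝ)⁻¹ * ∑ i, X (j, i) ω := funext₂ hY
  have hYmeas (j : Fin k) : Measurable fun ω ↦ (m : ℝ)⁻¹ * ∑ i, X (j, i) ω := by fun_prop
  have hYindep : iIndepFun (fun j ω ↦ (m : ℝ)⁻¹ * ∑ i, X (j, i) ω) ℙ :=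
    (hindep.curry hmeas).comp (fun _ x ↦ (m : ℝ)⁻¹ * ∑ i, x i) fun _ ↦ by fun_prop
  have hYL2 (j : Fin k) : MemLp (fun ω ↦ (m : ℝ)⁻¹ * ∑ i, X (j, i) ω) 2 ℙ :=
    (memLp_finsetSum _ fun i _ ↦ hL2 (j, i)).const_mul _
  have hYmean (j : Fin k) : ∫ ω, (m : ℝ)⁻¹ * ∑ i, X (j, i) ω = μ := by
    simpa using integral_inv_card_mul_sum_eq (fun i ↦ (hL2 (j, i)).integrable one_le_two)
      fun i ↦ hmean (j, i)
  have hYvar (j : Fin k) : variance (fun ω ↦ (m : ℝ)⁻¹ * ∑ i, X (j, i) ω) ℙ = σ ^ 2 / m := by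
    simpa using variance_inv_card_mul_sum_eq (fun i ↦ hL2 (j, i))
      (fun i i' hii' ↦ (hindep.precomp (Prod.mk_right_injective j)).indepFun hii')
      fun i ↦ hvar (j, i)
  have hbad := measure_lt_sq_median_sub_le hYmeas hYindep hYL2 hYmean hYvar (by simpa using hmed)
  have hthreshold : 32 * σ ^ 2 * Real.log (1 / δ) / n = 4 * (σ ^ 2 / m) := by
    rw [show Real.log (1 / δ) = k / 8 by linarith, hn]
    push_cast
    field_simp
    ring
  have hexp : Real.exp (-(Fintype.card (Fin k) : ℝ) / 8) = δ := by
    rw [Fintype.card_fin, hkδ, one_div, Real.log_inv, neg_div, mul_div_cancel_left₀ _ (by norm_num),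
      neg_neg, Real.exp_log hδ.1]
  rw [hthreshold]
  refine ofReal_one_sub_le_measure_of_measure_compl_le hδ.1.le ?_
  simpa only [Set.compl_ofPred, not_le, hexp] using hbad

/-- Median-of-means. Given `n = k*m` i.i.d. real random variables with mean `μ` and
variance `σ²`, partitioned into `k = 8 log(1/δ)` groups of size `m`, the median `med` of the `k`
group means satisfies `(med − μ)² ≤ 32 σ² log(1/δ) / n` with probability at least `1 − δ`. -/
theorem median_of_means
    {Ω : Type*} [MeasureSpace Ω] [IsProbabilityMeasure (ℙ : Measure Ω)]
    (k m n : ℕ) (hk : 0 < k) (hm : 0 < m) (hn : n = k * m)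
    (δ : ℝ) (hδ : δ ∈ Set.Ioo (0 : ℝ) 1) (hkδ : (k : ℝ) = 8 * Real.log (1 / δ))
    (X : Fin k × Fin m → Ω → ℝ) (μ σ : ℝ)
    (hmeas : ∀ i, Measurable (X i))
    (hindep : iIndepFun X ℙ)
    (hident : ∀ i j, IdentDistrib (X i) (X j) ℙ ℙ)
    (hL2 : ∀ i, MemLp (X i) 2 ℙ)
    (hmean : ∀ i, ∫ ω, X i ω ∂ℙ = μ)
    (hvar : ∀ i, variance (X i) ℙ = σ ^ 2)
    -- the group means
    (Y : Fin k → Ω → ℝ) (hY : ∀ j ω, Y j ω = (m : ℝ)⁻¹ * ∑ i : Fin m, X (j, i) ω)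
    -- `med` is a median of the group means
    (med : Ω → ℝ) (hmeas_med : Measurable med)
    (hmed : ∀ ω, (k : ℝ) / 2 ≤ (Finset.univ.filter fun j => Y j ω ≤ med ω).card ∧
                 (k : ℝ) / 2 ≤ (Finset.univ.filter fun j => med ω ≤ Y j ω).card) :
    ENNReal.ofReal (1 - δ) ≤
      ℙ {ω | (med ω - μ) ^ 2 ≤ 32 * σ ^ 2 * Real.log (1 / δ) / n} :=
  median_of_means_general k m n hk hm hn δ hδ hkδ X μ σ hmeas hindep hL2 hmean hvar Y hY med hmed
end

section
/- Let μ̄₁, ..., μ̄_k be independent ℝ^p-valued random variables each satisfying P(‖μ̄_i − μ‖ ≤ ε) ≥ 2/3. Define r_i = min{r ≥ 0 : at least k/2 of the points μ̄₁,...,μ̄_k lie in the closed ball B(μ̄_i, r)}, and let i* = argmin_i r_i. Then P(‖μ̄_{i*} − μ‖ ≤ 3ε) ≥ 1 − exp(−k/18). -/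
open MeasureTheory ProbabilityTheory Finset

/-!
Call the sample `μ̄ᵢ` good if `‖μ̄ᵢ - μ‖ ≤ ε`. If more than half of the samples are good, every
good sample has all good samples in its `2ε`-ball, so `r_{i*} ≤ 2ε`; the `r_{i*}`-ball around
`μ̄_{i*}` holds at least half of the samples, hence meets a good one, and `‖μ̄_{i*} - μ‖ ≤ 3ε`.
The number of bad samples is a sum of independent indicators of mean at most `1/3`, so by
Hoeffding's inequality it reaches `k/2 = k/3 + k/6` with probability at most
`exp(-2 (1/6)² k) = exp(-k/18)`.
-/

theorem measureReal_sum_ge_le_of_mem_Icc {Ω ι : Type*} [MeasurableSpace Ω] {P : Measure Ω}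
    [Fintype ι] {X : ι → Ω → ℝ} (hindep : iIndepFun X P) (hmeas : ∀ i, AEMeasurable (X i) P)
    (hX : ∀ i, ∀ᵐ ω ∂P, X i ω ∈ Set.Icc 0 1) {q t : ℝ} (hq : ∀ i, P[X i] ≤ q) (ht : 0 ≤ t) :
    P.real {ω | (q + t) * Fintype.card ι ≤ ∑ i, X i ω} ≤
      Real.exp (-2 * t ^ 2 * Fintype.card ι) := by
  have := hindep.isProbabilityMeasure
  have hcentered_indep : iIndepFun (fun i ω ↦ X i ω - P[X i]) P :=
    hindep.comp (fun i x ↦ x - ∫ ω, X i ω ∂P) fun _ ↦ measurable_id.sub_const _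
  have hsubG : ∀ i ∈ (univ : Finset ι),
      HasSubgaussianMGF (fun ω ↦ X i ω - P[X i]) ((‖(1 : ℝ) - 0‖₊ / 2) ^ 2) P :=
    fun i _ ↦ hasSubgaussianMGF_of_mem_Icc (hmeas i) (hX i)
  have hsum_mean : ∑ i, P[X i] ≤ q * Fintype.card ι := by
    simpa [mul_comm] using sum_le_sum fun i (_ : i ∈ univ) ↦ hq i
  have hsubset : {ω | (q + t) * Fintype.card ι ≤ ∑ i, X i ω} ⊆
      {ω | t * Fintype.card ι ≤ ∑ i, (X i ω - P[X i])} := by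
    intro ω hω
    simp only [Set.mem_ofPred_eq, sum_sub_distrib] at hω ⊢
    linarith
  calc P.real {ω | (q + t) * Fintype.card ι ≤ ∑ i, X i ω}
      ≤ P.real {ω | t * Fintype.card ι ≤ ∑ i, (X i ω - P[X i])} := measureReal_mono hsubset
    _ ≤ Real.exp (-(t * Fintype.card ι) ^ 2 / (2 * ∑ i, ((‖(1 : ℝ) - 0‖₊ / 2) ^ 2 : NNReal))) :=
      HasSubgaussianMGF.measure_sum_ge_le_of_iIndepFun hcentered_indep hsubG (by positivity)
    _ = Real.exp (-2 * t ^ 2 * Fintype.card ι) := by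
      congr 1
      rcases (Fintype.card ι).eq_zero_or_pos with hcard | hcard
      · simp [hcard]
      · simp only [sub_zero, nnnorm_one, sum_const, card_univ, nsmul_eq_mul, NNReal.coe_mul,
          NNReal.coe_natCast, NNReal.coe_div, NNReal.coe_pow, NNReal.coe_one, NNReal.coe_ofNat]
        field_simp

open Classical in
theorem measureReal_card_mem_ge_le {Ω ι E : Type*} [MeasurableSpace Ω] [MeasurableSpace E]
    {P : Measure Ω} [Fintype ι] {X : ι → Ω → E} (hindep : iIndepFun X P)
    (hmeas : ∀ i, Measurable (X i)) {S : Set E} (hS : MeasurableSet S) {q t : ℝ}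
    (hq : ∀ i, P.real (X i ⁻¹' S) ≤ q) (ht : 0 ≤ t) :
    P.real {ω | (q + t) * Fintype.card ι ≤ #{i | X i ω ∈ S}} ≤
      Real.exp (-2 * t ^ 2 * Fintype.card ι) := by
  set Z : ι → Ω → ℝ := fun i ↦ S.indicator 1 ∘ X i
  have hZ_indep : iIndepFun Z P := hindep.comp (fun _ ↦ S.indicator 1) fun _ ↦
    measurable_const.indicator hS
  have hZ_meas : ∀ i, AEMeasurable (Z i) P := fun i ↦
    ((measurable_const.indicator hS).comp (hmeas i)).aemeasurable
  have hZ_unit : ∀ i, ∀ᵐ ω ∂P, Z i ω ∈ Set.Icc 0 1 := fun i ↦ ae_of_all _ fun ω ↦ by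
    by_cases h : X i ω ∈ S <;> simp [Z, h]
  have hZ_mean : ∀ i, P[Z i] ≤ q := fun i ↦ (integral_indicator_one (hmeas i hS)).trans_le (hq i)
  have hZ_sum : ∀ ω, ∑ i, Z i ω = #{i | X i ω ∈ S} := fun ω ↦ by
    simp [Z, Set.indicator_apply, sum_boole]
  simpa only [hZ_sum] using measureReal_sum_ge_le_of_mem_Icc hZ_indep hZ_meas hZ_unit hZ_mean ht

theorem dist_le_three_mul_of_card_lt_half {E ι : Type*} [PseudoMetricSpace E] [Fintype ι]
    {x : ι → E} {c : E} {ε : ℝ}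
    (hfar : (#{j | ε < dist (x j) c} : ℝ) < (Fintype.card ι : ℝ) / 2) {r : ι → ℝ}
    (hr : ∀ i, IsLeast
      {ρ : ℝ | 0 ≤ ρ ∧ (Fintype.card ι : ℝ) / 2 ≤ #{j | dist (x j) (x i) ≤ ρ}} (r i))
    {i₀ : ι} (hi₀ : ∀ i, r i₀ ≤ r i) :
    dist (x i₀) c ≤ 3 * ε := by
  classical
  set G : Finset ι := {j | dist (x j) c ≤ ε}
  have hgood : (Fintype.card ι : ℝ) / 2 < #G := by
    have hcard : (#G : ℝ) + #{j | ε < dist (x j) c} = Fintype.card ι := by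
      simpa using congr_arg (Nat.cast (R := ℝ))
        (card_filter_add_card_filter_not (s := univ) fun j ↦ dist (x j) c ≤ ε)
    linarith
  obtain ⟨i, hiG⟩ : G.Nonempty :=
    card_pos.mp (by exact_mod_cast (by positivity : (0 : ℝ) ≤ _).trans_lt hgood)
  have hi : dist (x i) c ≤ ε := (mem_filter.mp hiG).2
  have hG_sub : G ⊆ ({j | dist (x j) (x i) ≤ 2 * ε} : Finset ι) := fun j hj ↦ by
    simp only [G, mem_filter, mem_univ, true_and] at hj ⊢
    linarith [dist_triangle_right (x j) (x i) c]
  have hri : r i ≤ 2 * ε := (hr i).2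
    ⟨by linarith [dist_nonneg (x := x i) (y := c)],
      hgood.le.trans (by exact_mod_cast card_le_card hG_sub)⟩
  set T : Finset ι := {j | dist (x j) (x i₀) ≤ r i₀}
  have hT : (Fintype.card ι : ℝ) / 2 ≤ #T := (hr i₀).1.2
  obtain ⟨j, hj⟩ : (T ∩ G).Nonempty := by
    refine inter_nonempty_of_card_lt_card_add_card (subset_univ _) (subset_univ _) ?_
    rw [card_univ, ← Nat.cast_lt (α := ℝ), Nat.cast_add]
    linarith
  simp only [T, G, mem_inter, mem_filter, mem_univ, true_and] at hj
  linarith [dist_triangle_left (x i₀) c (x j), hi₀ i]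

theorem ofReal_one_sub_le_measure_of_compl_subset {Ω : Type*} [MeasurableSpace Ω] {P : Measure Ω}
    [IsProbabilityMeasure P] {s t : Set Ω} {a : ℝ} (hst : sᶜ ⊆ t) (hs : P.real s ≤ a) :
    ENNReal.ofReal (1 - a) ≤ P t := by
  have hcover : 1 ≤ P.real s + P.real t :=
    calc 1 = P.real Set.univ := probReal_univ.symm
      _ ≤ P.real (s ∪ t) := measureReal_mono fun ω _ ↦ (em (ω ∈ s)).imp_right (@hst ω)
      _ ≤ P.real s + P.real t := measureReal_union_le s t
  rw [← ofReal_measureReal]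
  exact ENNReal.ofReal_le_ofReal (by linarith)

theorem robust_distance_approximation_general
    {Ω : Type*} [MeasureSpace Ω]
    (p k : ℕ) (ε : ℝ)
    (μ : EuclideanSpace ℝ (Fin p))
    (Y : Fin k → Ω → EuclideanSpace ℝ (Fin p))
    (hmeas : ∀ i, Measurable (Y i))
    (hindep : iIndepFun Y ℙ)
    (hconc : ∀ i, ENNReal.ofReal (2 / 3) ≤ ℙ {ω | ‖Y i ω - μ‖ ≤ ε})
    (r : Fin k → Ω → ℝ)
    (hr : ∀ i ω, IsLeast
      {ρ : ℝ | 0 ≤ ρ ∧ (k : ℝ) / 2 ≤ (Finset.univ.filter fun j => ‖Y j ω - Y i ω‖ ≤ ρ).card}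
      (r i ω))
    (istar : Ω → Fin k)
    (histar : ∀ ω i, r (istar ω) ω ≤ r i ω) :
    ENNReal.ofReal (1 - Real.exp (-(k : ℝ) / 18)) ≤
      ℙ {ω | ‖Y (istar ω) ω - μ‖ ≤ 3 * ε} := by
  have := hindep.isProbabilityMeasure
  set far : Set (EuclideanSpace ℝ (Fin p)) := {y | ε < ‖y - μ‖}
  have hfar : MeasurableSet far := measurableSet_lt measurable_const (by fun_prop)
  have hfar_prob : ∀ i, (ℙ : Measure Ω).real (Y i ⁻¹' far) ≤ 1 / 3 := fun i ↦ by
    have hnear : 2 / 3 ≤ (ℙ : Measure Ω).real {ω | ‖Y i ω - μ‖ ≤ ε} :=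
      (ENNReal.ofReal_le_iff_le_toReal (measure_ne_top _ _)).mp (hconc i)
    have hcompl : Y i ⁻¹' far = {ω | ‖Y i ω - μ‖ ≤ ε}ᶜ := by ext; simp [far]
    rw [hcompl, probReal_compl_eq_one_sub (measurableSet_le (by fun_prop) (by fun_prop))]
    linarith
  have htail : (ℙ : Measure Ω).real {ω | (k : ℝ) / 2 ≤ #{i | ε < ‖Y i ω - μ‖}} ≤
      Real.exp (-(k : ℝ) / 18) := by
    convert measureReal_card_mem_ge_le hindep hmeas hfar hfar_prob (t := 1 / 6) (by norm_num)
      using 4 <;> simp only [Fintype.card_fin, far, Set.mem_ofPred_eq] <;> ring_nf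
  refine ofReal_one_sub_le_measure_of_compl_subset (fun ω hω ↦ ?_) htail
  rw [Set.mem_ofPred_eq, ← dist_eq_norm]
  exact dist_le_three_mul_of_card_lt_half (x := (Y · ω)) (by simpa [dist_eq_norm] using hω)
    (fun i ↦ by simpa [dist_eq_norm] using hr i ω) (histar ω)

/-- Robust distance approximation. If `μ̄₁, ..., μ̄_k` are independent `ℝ^p`-valued
random variables with `P(‖μ̄ᵢ − μ‖ ≤ ε) ≥ 2/3` for all `i`, `rᵢ` is the smallest radius `r ≥ 0`
such that the ball `B(μ̄ᵢ, r)` contains at least `k/2` of the points, and `i*` minimizes `rᵢ`,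
then `P(‖μ̄_{i*} − μ‖ ≤ 3ε) ≥ 1 − exp(−k/18)`. -/
theorem robust_distance_approximation
    {Ω : Type*} [MeasureSpace Ω] [IsProbabilityMeasure (ℙ : Measure Ω)]
    (p k : ℕ) (hk : 0 < k) (ε : ℝ) (hε : 0 < ε)
    (μ : EuclideanSpace ℝ (Fin p))
    (Y : Fin k → Ω → EuclideanSpace ℝ (Fin p))
    (hmeas : ∀ i, Measurable (Y i))
    (hindep : iIndepFun Y ℙ)
    (hconc : ∀ i, ENNReal.ofReal (2 / 3) ≤ ℙ {ω | ‖Y i ω - μ‖ ≤ ε})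
    (r : Fin k → Ω → ℝ)
    (hr : ∀ i ω, IsLeast
      {ρ : ℝ | 0 ≤ ρ ∧ (k : ℝ) / 2 ≤ (Finset.univ.filter fun j => ‖Y j ω - Y i ω‖ ≤ ρ).card}
      (r i ω))
    (istar : Ω → Fin k)
    (histar : ∀ ω i, r (istar ω) ω ≤ r i ω) :
    ENNReal.ofReal (1 - Real.exp (-(k : ℝ) / 18)) ≤
      ℙ {ω | ‖Y (istar ω) ω - μ‖ ≤ 3 * ε} :=
  robust_distance_approximation_general p k ε μ Y hmeas hindep hconc r hr istar histar
end

section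
/- Let F = h + r where h : ℝ^d → ℝ is convex and L-smooth and r is convex. Suppose w_{t+1} minimizes w ↦ ⟨v, w⟩ + (1/(2η))‖w − w_t‖² + r(w) with η ≤ 1/(2L), where v is an arbitrary vector (an approximation of ∇h(w_t)). Then for every w: F(w_{t+1}) − F(w) ≤ (1/(2η))(‖w − w_t‖² − ‖w − w_{t+1}‖²) + η‖∇h(w_t) − v‖² + ⟨∇h(w_t) − v, w_t − w⟩. -/
/-!
Add up three inequalities: the descent lemma for the `L`-smooth `h` from `wₜ` to `w₁`, the
gradient inequality for the convex `h` from `wₜ` to `w`, and the quadratic growth of the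
`1/η`-strongly convex proximal objective away from its minimiser `w₁`. The remaining cross term
`⟪∇h(wₜ) - v, w₁ - wₜ⟫` is absorbed by Young's inequality into `η‖∇h(wₜ) - v‖²` and
`‖w₁ - wₜ‖² / (4η)`; since `η ≤ 1/(2L)`, the net coefficient of `‖w₁ - wₜ‖²` is then nonpositive.
-/

open scoped RealInnerProductSpace

open Set Filter Topology AffineMap

section Gradient

variable {F : Type*} [NormedAddCommGroup F] [InnerProductSpace ℝ F] [CompleteSpace F]
  {f : F → ℝ} {g x y : F}

theorem HasGradientAt.hasDerivAt_comp_lineMap {t : ℝ} (hf : HasGradientAt f g (lineMap x y t)) :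
    HasDerivAt (f ∘ lineMap x y) ⟪g, y - x⟫ t := by
  simpa only [InnerProductSpace.toDual_apply_apply] using
    hf.hasFDerivAt.comp_hasDerivAt t hasDerivAt_lineMap

theorem ConvexOn.add_inner_le_of_hasGradientAt {s : Set F} (hf : ConvexOn ℝ s f) (hx : x ∈ s)
    (hy : y ∈ s) (hg : HasGradientAt f g x) : f x + ⟪g, y - x⟫ ≤ f y := by
  have hline : ConvexOn ℝ (lineMap x y ⁻¹' s) (f ∘ lineMap x y) :=
    hf.comp_affineMap (lineMap x y : ℝ →ᵃ[ℝ] F)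
  have hg0 : HasGradientAt f g (lineMap x y (0 : ℝ)) := by simpa using hg
  have hderiv := hg0.hasDerivAt_comp_lineMap
  have := hline.le_slope_of_hasDerivAt (by simpa using hx) (by simpa using hy) zero_lt_one hderiv
  simp only [slope_def_field, Function.comp_apply, lineMap_apply_one, lineMap_apply_zero,
    sub_zero, div_one] at this
  linarith

theorem le_add_inner_add_of_norm_gradient_sub_le {g : F → F} {L : ℝ}
    (hf : ∀ z, HasGradientAt f (g z) z) (hg : ∀ z z', ‖g z - g z'‖ ≤ L * ‖z - z'‖) (x y : F) :
    f y ≤ f x + ⟪g x, y - x⟫ + L / 2 * ‖y - x‖ ^ 2 := by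
  set φ : ℝ → ℝ := fun t ↦ f (lineMap x y t) - t * ⟪g x, y - x⟫ - L / 2 * t ^ 2 * ‖y - x‖ ^ 2
  have hφ (t : ℝ) : HasDerivAt φ
      (⟪g (lineMap x y t) - g x, y - x⟫ - L * t * ‖y - x‖ ^ 2) t := by
    have hline : HasDerivAt (f ∘ lineMap x y) ⟪g (lineMap x y t), y - x⟫ t :=
      (hf _).hasDerivAt_comp_lineMap
    refine ((hline.sub ((hasDerivAt_id' t).mul_const ⟪g x, y - x⟫)).sub
      (((hasDerivAt_pow 2 t).const_mul (L / 2)).mul_const (‖y - x‖ ^ 2))).congr_deriv ?_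
    simp only [inner_sub_left]
    ring
  have hanti : AntitoneOn φ (Icc 0 1) := by
    refine antitoneOn_of_hasDerivWithinAt_nonpos (convex_Icc 0 1)
      (fun t _ ↦ (hφ t).continuousAt.continuousWithinAt) (fun t _ ↦ (hφ t).hasDerivWithinAt) ?_
    intro t ht
    rw [interior_Icc] at ht
    have hdist : ‖lineMap x y t - x‖ = t * ‖y - x‖ := by
      rw [← dist_eq_norm, dist_lineMap_left, Real.norm_of_nonneg ht.1.le, dist_eq_norm']
    calc ⟪g (lineMap x y t) - g x, y - x⟫ - L * t * ‖y - x‖ ^ 2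
        ≤ L * ‖lineMap x y t - x‖ * ‖y - x‖ - L * t * ‖y - x‖ ^ 2 := by
          gcongr
          exact (real_inner_le_norm _ _).trans (by gcongr; exact hg _ _)
      _ = 0 := by rw [hdist]; ring
  have := hanti (left_mem_Icc.2 zero_le_one) (right_mem_Icc.2 zero_le_one) zero_le_one
  simp only [φ, lineMap_apply_zero, lineMap_apply_one, zero_mul, zero_pow two_ne_zero, mul_zero,
    one_mul, one_pow, mul_one, sub_zero] at this
  linarith

end Gradient

theorem real_inner_le_mul_norm_sq_add_norm_sq_div {E : Type*} [NormedAddCommGroup E]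
    [InnerProductSpace ℝ E] {ε : ℝ} (hε : 0 < ε) (a b : E) :
    ⟪a, b⟫ ≤ ε * ‖a‖ ^ 2 + ‖b‖ ^ 2 / (4 * ε) := by
  have h := norm_sub_sq_real ((2 * ε) • a) b
  rw [norm_smul, real_inner_smul_left, Real.norm_of_nonneg (by positivity)] at h
  rw [← sub_nonneg]
  have : 0 ≤ ‖(2 * ε) • a - b‖ ^ 2 / (4 * ε) := by positivity
  convert this using 1
  rw [h]; field_simp; ring

theorem UniformConvexOn.add_le_of_isMinOn {E : Type*} [NormedAddCommGroup E] [NormedSpace ℝ E]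
    {s : Set E} {φ : ℝ → ℝ} {f : E → ℝ} {x y : E}
    (hf : UniformConvexOn s φ f) (hmin : IsMinOn f s x) (hx : x ∈ s) (hy : y ∈ s) :
    f x + φ ‖y - x‖ ≤ f y := by
  have hseg (t : ℝ) (ht : t ∈ Ioo (0 : ℝ) 1) : (1 - t) * φ ‖y - x‖ ≤ f y - f x := by
    have hconv := hf.2 hy hx ht.1.le (sub_nonneg.2 ht.2.le) (add_sub_cancel t 1)
    have hle : f x ≤ f (t • y + (1 - t) • x) :=
      hmin (hf.1 hy hx ht.1.le (sub_nonneg.2 ht.2.le) (add_sub_cancel t 1))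
    simp only [smul_eq_mul] at hconv
    refine le_of_mul_le_mul_left ?_ ht.1
    linarith
  have hlim : Tendsto (fun t : ℝ ↦ (1 - t) * φ ‖y - x‖) (𝓝[>] 0) (𝓝 (φ ‖y - x‖)) := by
    have : Continuous fun t : ℝ ↦ (1 - t) * φ ‖y - x‖ := by fun_prop
    simpa using (this.tendsto 0).mono_left nhdsWithin_le_nhds
  have := le_of_tendsto hlim <| by
    filter_upwards [Ioo_mem_nhdsGT one_pos] with t ht using hseg t ht
  linarith

section ProximalObjective

variable {E : Type*} [NormedAddCommGroup E] [InnerProductSpace ℝ E]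

noncomputable def proxObjective (r : E → ℝ) (v a : E) (η : ℝ) (w : E) : ℝ :=
  ⟪v, w⟫ + 1 / (2 * η) * ‖w - a‖ ^ 2 + r w

theorem ConvexOn.strongConvexOn_proxObjective {s : Set E} {r : E → ℝ} (hr : ConvexOn ℝ s r)
    (v a : E) (η : ℝ) : StrongConvexOn s (1 / η) (proxObjective r v a η) := by
  rw [strongConvexOn_iff_convex]
  have hlin : ConvexOn ℝ s fun w ↦ ⟪v - (1 / η) • a, w⟫ + 1 / (2 * η) * ‖a‖ ^ 2 :=
    ((innerSL ℝ (v - (1 / η) • a)).toLinearMap.convexOn hr.1).add_const _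
  refine (hlin.add hr).congr fun w _ ↦ ?_
  simp only [Pi.add_apply, proxObjective, norm_sub_sq_real, inner_sub_left, real_inner_smul_left,
    real_inner_comm a w]
  ring

end ProximalObjective

theorem inexact_prox_grad_one_step_general {d : ℕ}
    (h : EuclideanSpace ℝ (Fin d) → ℝ) (gradh : EuclideanSpace ℝ (Fin d) → EuclideanSpace ℝ (Fin d))
    (r : EuclideanSpace ℝ (Fin d) → ℝ)
    (L η : ℝ) (hη : 0 < η) (hηL : η ≤ 1 / (2 * L))
    (hconv : ConvexOn ℝ Set.univ h) (hrconv : ConvexOn ℝ Set.univ r)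
    (hgrad : ∀ w, HasGradientAt h (gradh w) w)
    (hsmooth : ∀ w w', ‖gradh w - gradh w'‖ ≤ L * ‖w - w'‖)
    (v wt w₁ : EuclideanSpace ℝ (Fin d))
    (hmin : ∀ w, ⟪v, w₁⟫ + 1 / (2 * η) * ‖w₁ - wt‖ ^ 2 + r w₁ ≤
                 ⟪v, w⟫ + 1 / (2 * η) * ‖w - wt‖ ^ 2 + r w) :
    ∀ w, (h w₁ + r w₁) - (h w + r w) ≤
      1 / (2 * η) * (‖w - wt‖ ^ 2 - ‖w - w₁‖ ^ 2)
      + η * ‖gradh wt - v‖ ^ 2 + ⟪gradh wt - v, wt - w⟫ := by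
  intro w
  have hupper := le_add_inner_add_of_norm_gradient_sub_le hgrad hsmooth wt w₁
  have hlower := hconv.add_inner_le_of_hasGradientAt (mem_univ wt) (mem_univ w) (hgrad wt)
  have hprox := (hrconv.strongConvexOn_proxObjective v wt η).add_le_of_isMinOn
    (fun z _ ↦ hmin z) (mem_univ w₁) (mem_univ w)
  have hyoung := real_inner_le_mul_norm_sq_add_norm_sq_div hη (gradh wt - v) (w₁ - wt)
  have hstep : L / 2 * ‖w₁ - wt‖ ^ 2 ≤ ‖w₁ - wt‖ ^ 2 / (4 * η) := by
    have hLη : 2 * L * η ≤ 1 := by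
      rcases le_or_gt L 0 with hL | hL
      · nlinarith
      · rwa [le_div_iff₀ (by positivity), mul_comm η] at hηL
    rw [le_div_iff₀ (by positivity)]
    nlinarith [sq_nonneg ‖w₁ - wt‖]
  have hsplit : ⟪gradh wt, w₁ - wt⟫ - ⟪gradh wt, w - wt⟫ + ⟪v, w⟫ - ⟪v, w₁⟫ =
      ⟪gradh wt - v, w₁ - wt⟫ + ⟪gradh wt - v, wt - w⟫ := by
    simp only [inner_sub_left, inner_sub_right]
    ring
  simp only [proxObjective] at hprox
  linear_combination hupper + hlower + hprox + hyoung + hstep + hsplit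

/-- One-step inexact proximal gradient bound. Let `F = h + r` with `h` convex and
`L`-smooth and `r` convex. If `w₁` minimizes `w ↦ ⟨v, w⟩ + (1/(2η))‖w − wₜ‖² + r(w)` with
`η ≤ 1/(2L)`, then for every `w`:
`F(w₁) − F(w) ≤ (1/(2η))(‖w − wₜ‖² − ‖w − w₁‖²) + η‖∇h(wₜ) − v‖² + ⟨∇h(wₜ) − v, wₜ − w⟩`. -/
theorem inexact_prox_grad_one_step {d : ℕ}
    (h : EuclideanSpace ℝ (Fin d) → ℝ) (gradh : EuclideanSpace ℝ (Fin d) → EuclideanSpace ℝ (Fin d))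
    (r : EuclideanSpace ℝ (Fin d) → ℝ)
    (L η : ℝ) (hL : 0 < L) (hη : 0 < η) (hηL : η ≤ 1 / (2 * L))
    (hconv : ConvexOn ℝ Set.univ h) (hrconv : ConvexOn ℝ Set.univ r)
    (hgrad : ∀ w, HasGradientAt h (gradh w) w)
    (hsmooth : ∀ w w', ‖gradh w - gradh w'‖ ≤ L * ‖w - w'‖)
    (v wt w₁ : EuclideanSpace ℝ (Fin d))
    (hmin : ∀ w, ⟪v, w₁⟫ + 1 / (2 * η) * ‖w₁ - wt‖ ^ 2 + r w₁ ≤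
                 ⟪v, w⟫ + 1 / (2 * η) * ‖w - wt‖ ^ 2 + r w) :
    ∀ w, (h w₁ + r w₁) - (h w + r w) ≤
      1 / (2 * η) * (‖w - wt‖ ^ 2 - ‖w - w₁‖ ^ 2)
      + η * ‖gradh wt - v‖ ^ 2 + ⟪gradh wt - v, wt - w⟫ :=
  inexact_prox_grad_one_step_general h gradh r L η hη hηL hconv hrconv hgrad hsmooth v wt w₁ hmin
end

section
/- Reference truncation bias bound: let z be an ℝ^{p×d}-valued random variable with E[z] = G and E‖z − G‖² ≤ σ̂², and let z̃₀ be a fixed matrix with ‖z̃₀ − G‖ ≤ Δ. Define ẑ = z if ‖z − z̃₀‖ ≤ Δ + λ and ẑ = z̃₀ otherwise, for some λ > 0. Then: (i) ‖ẑ − G‖ ≤ 2Δ + λ always; (ii) ‖E[ẑ − G]‖ ≤ (σ̂²/λ²)Δ + σ̂²/λ; (iii) (E‖ẑ − G‖²)^{1/2} ≤ σ̂ + Δ·σ̂/λ. -/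
/-!
Far from the reference, `‖z − z̃₀‖ > Δ + λ` forces `‖z − G‖ ≥ λ`, so there `1 ≤ ‖z − G‖ / λ`.
This turns the pointwise errors of the truncation into multiples of `‖z − G‖`:
`‖ẑ − G‖ ≤ (1 + Δ/λ) ‖z − G‖` and `‖ẑ − z‖ ≤ (Δ/λ² + 1/λ) ‖z − G‖²`. Since `E[z − G] = 0`, the
bias `E[ẑ − G]` equals `E[ẑ − z]`, which the second bound controls; the first, squared and
integrated, bounds the second moment. Markov's inequality enters only in this pointwise form.
-/

open MeasureTheory ProbabilityTheory

section Pointwise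

variable {E : Type*} [SeminormedAddCommGroup E]

noncomputable def refTruncate (c : E) (r : ℝ) (x : E) : E := if ‖x - c‖ ≤ r then x else c

variable {c g x : E} {Δ lam : ℝ}

lemma le_norm_sub_of_lt_norm_sub (hc : ‖c - g‖ ≤ Δ) (hx : Δ + lam < ‖x - c‖) :
    lam ≤ ‖x - g‖ := by
  have := norm_sub_le_norm_sub_add_norm_sub x g c
  rw [norm_sub_rev g c] at this
  linarith

lemma norm_refTruncate_sub_le (hc : ‖c - g‖ ≤ Δ) (hlam : 0 ≤ lam) (x : E) :
    ‖refTruncate c (Δ + lam) x - g‖ ≤ 2 * Δ + lam := by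
  have hΔ : 0 ≤ Δ := (norm_nonneg _).trans hc
  unfold refTruncate
  split_ifs with hnear
  · linarith [norm_sub_le_norm_sub_add_norm_sub x c g]
  · linarith

lemma norm_refTruncate_sub_le_mul (hc : ‖c - g‖ ≤ Δ) (hlam : 0 < lam) (x : E) :
    ‖refTruncate c (Δ + lam) x - g‖ ≤ (1 + Δ / lam) * ‖x - g‖ := by
  have hΔ : 0 ≤ Δ := (norm_nonneg _).trans hc
  unfold refTruncate
  split_ifs with hnear
  · exact le_mul_of_one_le_left (norm_nonneg _) (by linarith [div_nonneg hΔ hlam.le])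
  · have hfar : 1 ≤ ‖x - g‖ / lam :=
      (one_le_div hlam).2 (le_norm_sub_of_lt_norm_sub hc (not_le.1 hnear))
    calc ‖c - g‖ ≤ Δ * (‖x - g‖ / lam) := hc.trans (le_mul_of_one_le_right hΔ hfar)
      _ ≤ (1 + Δ / lam) * ‖x - g‖ := by
        have := norm_nonneg (x - g)
        rw [add_mul, one_mul, mul_div_assoc', div_mul_eq_mul_div]
        linarith

lemma norm_refTruncate_sub_self_le (hc : ‖c - g‖ ≤ Δ) (hlam : 0 < lam) (x : E) :
    ‖refTruncate c (Δ + lam) x - x‖ ≤ (Δ / lam ^ 2 + 1 / lam) * ‖x - g‖ ^ 2 := by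
  have hΔ : 0 ≤ Δ := (norm_nonneg _).trans hc
  unfold refTruncate
  split_ifs with hnear
  · rw [sub_self, norm_zero]
    positivity
  · have hfar : 1 ≤ ‖x - g‖ / lam :=
      (one_le_div hlam).2 (le_norm_sub_of_lt_norm_sub hc (not_le.1 hnear))
    calc ‖c - x‖ ≤ Δ + ‖x - g‖ := by
          linarith [norm_sub_le_norm_sub_add_norm_sub c g x, norm_sub_rev g x]
      _ ≤ Δ * (‖x - g‖ / lam) ^ 2 + ‖x - g‖ * (‖x - g‖ / lam) :=
          add_le_add (le_mul_of_one_le_right hΔ (one_le_pow₀ hfar))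
            (le_mul_of_one_le_right (norm_nonneg _) hfar)
      _ = (Δ / lam ^ 2 + 1 / lam) * ‖x - g‖ ^ 2 := by ring

end Pointwise

section Integral

variable {Ω : Type*} [MeasurableSpace Ω] {μ : Measure Ω}
  {E : Type*} [NormedAddCommGroup E]

lemma norm_integral_le_of_norm_sub_le [NormedSpace ℝ E] {f h : Ω → E} {b : Ω → ℝ} (hh : Integrable h μ)
    (hh0 : ∫ ω, h ω ∂μ = 0) (hb : Integrable b μ) (hfh : ∀ ω, ‖f ω - h ω‖ ≤ b ω) :
    ‖∫ ω, f ω ∂μ‖ ≤ ∫ ω, b ω ∂μ := by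
  by_cases hf : Integrable f μ
  · have hsplit : ∫ ω, f ω ∂μ = ∫ ω, (f ω - h ω) ∂μ := by
      rw [integral_sub hf hh, hh0, sub_zero]
    rw [hsplit]
    exact norm_integral_le_of_norm_le hb (.of_forall hfh)
  · rw [integral_undef hf, norm_zero]
    exact integral_nonneg fun ω => (norm_nonneg _).trans (hfh ω)

variable {z : Ω → E} {c g : E} {Δ lam : ℝ}

lemma norm_integral_refTruncate_sub_le [NormedSpace ℝ E] [CompleteSpace E] [IsProbabilityMeasure μ] (hz : Integrable z μ)
    (hmean : ∫ ω, z ω ∂μ = g) (hz2 : Integrable (fun ω => ‖z ω - g‖ ^ 2) μ)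
    (hc : ‖c - g‖ ≤ Δ) (hlam : 0 < lam) :
    ‖∫ ω, (refTruncate c (Δ + lam) (z ω) - g) ∂μ‖
      ≤ (Δ / lam ^ 2 + 1 / lam) * ∫ ω, ‖z ω - g‖ ^ 2 ∂μ := by
  have hcentered : ∫ ω, (z ω - g) ∂μ = 0 := by
    rw [integral_sub hz (integrable_const g), hmean, integral_const, probReal_univ, one_smul,
      sub_self]
  rw [← integral_const_mul]
  refine norm_integral_le_of_norm_sub_le (h := fun ω => z ω - g) (hz.sub (integrable_const g))
    hcentered
    (hz2.const_mul _) fun ω => ?_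
  rw [sub_sub_sub_cancel_right]
  exact norm_refTruncate_sub_self_le hc hlam (z ω)

lemma integral_norm_refTruncate_sub_sq_le (hz2 : Integrable (fun ω => ‖z ω - g‖ ^ 2) μ)
    (hc : ‖c - g‖ ≤ Δ) (hlam : 0 < lam) :
    ∫ ω, ‖refTruncate c (Δ + lam) (z ω) - g‖ ^ 2 ∂μ
      ≤ (1 + Δ / lam) ^ 2 * ∫ ω, ‖z ω - g‖ ^ 2 ∂μ := by
  rw [← integral_const_mul]
  refine integral_mono_of_nonneg (.of_forall fun ω => by positivity) (hz2.const_mul _)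
    (.of_forall fun ω => ?_)
  dsimp only
  rw [← mul_pow]
  exact pow_le_pow_left₀ (norm_nonneg _) (norm_refTruncate_sub_le_mul hc hlam (z ω)) 2

end Integral

theorem reference_truncation_bounds_general
    {Ω : Type*} [MeasureSpace Ω] [IsProbabilityMeasure (ℙ : Measure Ω)]
    (p d : ℕ) (z : Ω → EuclideanSpace ℝ (Fin p × Fin d))
    (G ztilde : EuclideanSpace ℝ (Fin p × Fin d))
    (σhat Δ lam : ℝ) (hσ : 0 ≤ σhat) (hlam : 0 < lam)
    (hint : Integrable z ℙ) (hint2 : Integrable (fun ω => ‖z ω - G‖ ^ 2) ℙ)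
    (hmean : ∫ ω, z ω ∂ℙ = G)
    (hvar : ∫ ω, ‖z ω - G‖ ^ 2 ∂ℙ ≤ σhat ^ 2)
    (href : ‖ztilde - G‖ ≤ Δ)
    (zhat : Ω → EuclideanSpace ℝ (Fin p × Fin d))
    (hzhat : ∀ ω, zhat ω = if ‖z ω - ztilde‖ ≤ Δ + lam then z ω else ztilde) :
    (∀ ω, ‖zhat ω - G‖ ≤ 2 * Δ + lam) ∧
    ‖∫ ω, (zhat ω - G) ∂ℙ‖ ≤ σhat ^ 2 / lam ^ 2 * Δ + σhat ^ 2 / lam ∧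
    Real.sqrt (∫ ω, ‖zhat ω - G‖ ^ 2 ∂ℙ) ≤ σhat + Δ * σhat / lam := by
  obtain rfl : zhat = fun ω => refTruncate ztilde (Δ + lam) (z ω) := funext hzhat
  have hΔ : 0 ≤ Δ := (norm_nonneg _).trans href
  refine ⟨fun ω => norm_refTruncate_sub_le href hlam.le (z ω), ?_, ?_⟩
  · calc _ ≤ (Δ / lam ^ 2 + 1 / lam) * ∫ ω, ‖z ω - G‖ ^ 2 :=
          norm_integral_refTruncate_sub_le hint hmean hint2 href hlam
      _ ≤ (Δ / lam ^ 2 + 1 / lam) * σhat ^ 2 := by gcongr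
      _ = σhat ^ 2 / lam ^ 2 * Δ + σhat ^ 2 / lam := by ring
  · refine Real.sqrt_le_iff.2 ⟨by positivity, ?_⟩
    calc _ ≤ (1 + Δ / lam) ^ 2 * ∫ ω, ‖z ω - G‖ ^ 2 :=
          integral_norm_refTruncate_sub_sq_le hint2 href hlam
      _ ≤ (1 + Δ / lam) ^ 2 * σhat ^ 2 := by gcongr
      _ = (σhat + Δ * σhat / lam) ^ 2 := by ring

/-- Reference truncation bias bounds. Let `z` be a random matrix (Frobenius norm)
with mean `G` and `E‖z − G‖² ≤ σ̂²`, and `z̃₀` a fixed matrix with `‖z̃₀ − G‖ ≤ Δ`. With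
`ẑ = z` if `‖z − z̃₀‖ ≤ Δ + λ` and `ẑ = z̃₀` otherwise: (i) `‖ẑ − G‖ ≤ 2Δ + λ` always;
(ii) `‖E[ẑ − G]‖ ≤ (σ̂²/λ²)Δ + σ̂²/λ`; (iii) `(E‖ẑ − G‖²)^{1/2} ≤ σ̂ + Δσ̂/λ`. -/
theorem reference_truncation_bounds
    {Ω : Type*} [MeasureSpace Ω] [IsProbabilityMeasure (ℙ : Measure Ω)]
    (p d : ℕ) (z : Ω → EuclideanSpace ℝ (Fin p × Fin d))
    (G ztilde : EuclideanSpace ℝ (Fin p × Fin d))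
    (σhat Δ lam : ℝ) (hσ : 0 ≤ σhat) (hlam : 0 < lam)
    (hmeas : Measurable z)
    (hint : Integrable z ℙ) (hint2 : Integrable (fun ω => ‖z ω - G‖ ^ 2) ℙ)
    (hmean : ∫ ω, z ω ∂ℙ = G)
    (hvar : ∫ ω, ‖z ω - G‖ ^ 2 ∂ℙ ≤ σhat ^ 2)
    (href : ‖ztilde - G‖ ≤ Δ)
    (zhat : Ω → EuclideanSpace ℝ (Fin p × Fin d))
    (hzhat : ∀ ω, zhat ω = if ‖z ω - ztilde‖ ≤ Δ + lam then z ω else ztilde) :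
    (∀ ω, ‖zhat ω - G‖ ≤ 2 * Δ + lam) ∧
    ‖∫ ω, (zhat ω - G) ∂ℙ‖ ≤ σhat ^ 2 / lam ^ 2 * Δ + σhat ^ 2 / lam ∧
    Real.sqrt (∫ ω, ‖zhat ω - G‖ ^ 2 ∂ℙ) ≤ σhat + Δ * σhat / lam :=
  reference_truncation_bounds_general p d z G ztilde σhat Δ lam hσ hlam hint hint2 hmean hvar href
    zhat hzhat
end

section
/- Expected one-step bound for biased compositional proximal gradient: suppose F = f∘g + r with f∘g convex and L-smooth, η ≤ 1/(2L), and the update w_{t+1} = argmin_w ⟨ẑᵀ∇f(ŷ), w⟩ + (1/(2η))‖w − w_t‖² + r(w), where ŷ, ẑ are independent unbiased estimators of g(w_t) and ∇g(w_t) with E‖ŷ − g(w_t)‖² ≤ σ₀²/m and E‖ẑ − ∇g(w_t)‖² ≤ σ₁²/m, E‖ẑ‖² ≤ C_g², ‖∇f‖ ≤ C_f, and ∇f is L_f-Lipschitz. Then for any fixed w: E[F(w_{t+1}) − F(w)] ≤ (1/(2η))( E‖w − w_t‖² − E‖w − w_{t+1}‖² ) + (μ/4) E‖w − w_t‖² +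 2η C_f² σ₁²/m + 2η C_g² L_f² σ₀²/m + C_g² L_f² σ₀²/(μ m). -/
/-!
The update is an inexact proximal gradient step for `h = f ∘ g` with the biased gradient estimate
`b = ẑᵀ∇f(ŷ)`. The descent lemma for `h`, its gradient inequality at `wₜ`, and the `1/η`-strong
convexity of the prox objective give
`F(w₁) - F(w) ≤ (‖w - wₜ‖² - ‖w - w₁‖²)/(2η) + η‖∇h(wₜ) - b‖² + ⟪∇h(wₜ) - b, wₜ - w⟫`,
the quadratic term `L/2 ‖w₁ - wₜ‖²` being absorbed thanks to `η ≤ 1/(2L)`. The gradient error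
splits as `ẑᵀ(∇f(g wₜ) - ∇f(ŷ)) + (∇g(wₜ) - ẑ)ᵀ∇f(g wₜ)`. The first part has norm at most
`L_f‖ẑ‖‖ŷ - g wₜ‖`; its inner product with `wₜ - w` is handled by Young's inequality with weight
`μ`, and `E[‖ẑ‖²‖ŷ - g wₜ‖²]` factorises by independence. The second part has norm at most
`C_f‖ẑ - ∇g(wₜ)‖`, and its inner product with `wₜ - w` has mean zero because `ẑ` is unbiased.
-/

open MeasureTheory ProbabilityTheory Set Filter Topology
open scoped RealInnerProductSpace

theorem norm_add_sq_le_two_mul {E : Type*} [SeminormedAddCommGroup E] (x y : E) :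
    ‖x + y‖ ^ 2 ≤ 2 * ‖x‖ ^ 2 + 2 * ‖y‖ ^ 2 := by
  calc ‖x + y‖ ^ 2 ≤ (‖x‖ + ‖y‖) ^ 2 := by gcongr; exact norm_add_le x y
    _ ≤ 2 * (‖x‖ ^ 2 + ‖y‖ ^ 2) := add_sq_le
    _ = _ := by ring

theorem StrongConvexOn.add_sq_norm_sub_le_of_isMinOn {E : Type*} [NormedAddCommGroup E]
    [NormedSpace ℝ E] {f : E → ℝ} {m : ℝ} {u : E} (hf : StrongConvexOn univ m f)
    (hu : IsMinOn f univ u) (w : E) : f u + m / 2 * ‖w - u‖ ^ 2 ≤ f w := by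
  have hshrink : ∀ a ∈ Ioo (0 : ℝ) 1, m / 2 * (1 - a) * ‖w - u‖ ^ 2 ≤ f w - f u := by
    rintro a ⟨ha₀, ha₁⟩
    have hconv := hf.2 (mem_univ u) (mem_univ w) (sub_nonneg.2 ha₁.le) ha₀.le (sub_add_cancel 1 a)
    have hmin := isMinOn_univ_iff.1 hu ((1 - a) • u + a • w)
    rw [norm_sub_rev] at hconv
    simp only [smul_eq_mul] at hconv
    have : a * (m / 2 * (1 - a) * ‖w - u‖ ^ 2) ≤ a * (f w - f u) := by nlinarith
    exact le_of_mul_le_mul_left this ha₀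
  have hlim : Tendsto (fun a : ℝ => m / 2 * (1 - a) * ‖w - u‖ ^ 2) (𝓝[>] 0)
      (𝓝 (m / 2 * (1 - 0) * ‖w - u‖ ^ 2)) :=
    (Continuous.tendsto (by fun_prop) 0).mono_left nhdsWithin_le_nhds
  have := le_of_tendsto hlim (eventually_of_mem (Ioo_mem_nhdsGT one_pos) hshrink)
  linarith

section InnerProductSpace

variable {E : Type*} [NormedAddCommGroup E] [InnerProductSpace ℝ E]

theorem real_inner_le_mul_norm_sq_add_mul_norm_sq {a b : ℝ} (ha : 0 < a) (hab : 1 ≤ 4 * a * b)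
    (x y : E) : ⟪x, y⟫ ≤ a * ‖x‖ ^ 2 + b * ‖y‖ ^ 2 := by
  -- `4a (a‖x‖² + b‖y‖² - ‖x‖‖y‖) = (2a‖x‖ - ‖y‖)² + (4ab - 1)‖y‖²`
  have key : 0 ≤ 4 * a * (a * ‖x‖ ^ 2 + b * ‖y‖ ^ 2 - ‖x‖ * ‖y‖) := by
    nlinarith [sq_nonneg (2 * a * ‖x‖ - ‖y‖), mul_nonneg (sub_nonneg.2 hab) (sq_nonneg ‖y‖)]
  nlinarith [real_inner_le_norm x y, nonneg_of_mul_nonneg_right key (by positivity)]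

noncomputable def proxLinearModel (r : E → ℝ) (η : ℝ) (x b : E) (v : E) : ℝ :=
  ⟪b, v⟫ + 1 / (2 * η) * ‖v - x‖ ^ 2 + r v

theorem ConvexOn.strongConvexOn_proxLinearModel {r : E → ℝ} (hr : ConvexOn ℝ univ r) (η : ℝ)
    (x b : E) : StrongConvexOn univ η⁻¹ (proxLinearModel r η x b) := by
  rw [strongConvexOn_iff_convex]
  have hsplit : (fun v => proxLinearModel r η x b v - η⁻¹ / 2 * ‖v‖ ^ 2) =
      (fun v => innerₛₗ ℝ (b - η⁻¹ • x) v) + fun v => r v + 1 / (2 * η) * ‖x‖ ^ 2 := by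
    ext v
    simp only [proxLinearModel, Pi.add_apply, innerₛₗ_apply_apply, norm_sub_sq_real,
      inner_sub_left, real_inner_smul_left, real_inner_comm x v]
    ring
  rw [hsplit]
  exact ((innerₛₗ ℝ _).convexOn convex_univ).add (hr.add_const _)

theorem three_point_of_isMinOn_proxLinearModel {r : E → ℝ} (hr : ConvexOn ℝ univ r) {η : ℝ}
    {x b u : E} (hu : IsMinOn (proxLinearModel r η x b) univ u) (w : E) :
    ⟪b, u - w⟫ + r u - r w ≤ 1 / (2 * η) * (‖w - x‖ ^ 2 - ‖w - u‖ ^ 2 - ‖u - x‖ ^ 2) := by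
  have := (hr.strongConvexOn_proxLinearModel η x b).add_sq_norm_sub_le_of_isMinOn hu w
  rw [show η⁻¹ / 2 = 1 / (2 * η) by ring] at this
  simp only [proxLinearModel, inner_sub_right] at this ⊢
  linarith

variable [CompleteSpace E]

theorem HasGradientAt.hasDerivAt_comp_lineMap_s19 {h : E → ℝ} {G x y : E} {t : ℝ}
    (hG : HasGradientAt h G (AffineMap.lineMap x y t)) :
    HasDerivAt (fun t => h (AffineMap.lineMap x y t)) ⟪G, y - x⟫ t := by
  have := hG.hasFDerivAt.comp_hasDerivAt t (AffineMap.hasDerivAt_lineMap (a := x) (b := y))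
  simpa [Function.comp_def] using this

theorem ConvexOn.add_inner_le_of_hasGradientAt_s19 {h : E → ℝ} {G x : E} (hh : ConvexOn ℝ univ h)
    (hG : HasGradientAt h G x) (y : E) : h x + ⟪G, y - x⟫ ≤ h y := by
  have hline : ConvexOn ℝ univ (fun t : ℝ => h (AffineMap.lineMap x y t)) :=
    hh.comp_affineMap (AffineMap.lineMap x y)
  have hderiv := HasGradientAt.hasDerivAt_comp_lineMap_s19 (t := 0) (y := y) (by simpa using hG)
  have := hline.le_slope_of_hasDerivAt (mem_univ 0) (mem_univ 1) one_pos hderiv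
  simp only [slope_def_field, AffineMap.lineMap_apply_one, AffineMap.lineMap_apply_zero, sub_zero,
    div_one] at this
  linarith

theorem le_add_inner_add_sq_of_lipschitz_gradient {h : E → ℝ} {G : E → E} {L : ℝ}
    (hG : ∀ x, HasGradientAt h (G x) x) (hGL : ∀ x y, ‖G x - G y‖ ≤ L * ‖x - y‖) (x y : E) :
    h y ≤ h x + ⟪G x, y - x⟫ + L / 2 * ‖y - x‖ ^ 2 := by
  have hderiv (t : ℝ) := (hG (AffineMap.lineMap x y t)).hasDerivAt_comp_lineMap_s19
  have hquad (t : ℝ) : HasDerivAt (fun t => h x + t * ⟪G x, y - x⟫ + L / 2 * ‖y - x‖ ^ 2 * t ^ 2)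
      (⟪G x, y - x⟫ + L * ‖y - x‖ ^ 2 * t) t := by
    refine ((((hasDerivAt_id t).mul_const ⟪G x, y - x⟫).const_add (h x)).add
      ((hasDerivAt_pow 2 t).const_mul (L / 2 * ‖y - x‖ ^ 2))).congr_deriv ?_
    push_cast
    ring
  have hslope (t : ℝ) (ht : 0 ≤ t) :
      ⟪G (AffineMap.lineMap x y t), y - x⟫ ≤ ⟪G x, y - x⟫ + L * ‖y - x‖ ^ 2 * t := by
    have hlip : ⟪G (AffineMap.lineMap x y t) - G x, y - x⟫ ≤ L * ‖y - x‖ ^ 2 * t := by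
      calc _ ≤ ‖G (AffineMap.lineMap x y t) - G x‖ * ‖y - x‖ := real_inner_le_norm _ _
        _ ≤ L * ‖AffineMap.lineMap x y t - x‖ * ‖y - x‖ := by gcongr; exact hGL _ _
        _ = L * ‖y - x‖ ^ 2 * t := by
          rw [← vsub_eq_sub, AffineMap.lineMap_vsub_left, vsub_eq_sub, norm_smul,
            Real.norm_of_nonneg ht]
          ring
    rw [inner_sub_left] at hlip
    linarith
  simpa using image_le_of_deriv_right_le_deriv_boundary
    (fun t _ => (hderiv t).continuousAt.continuousWithinAt)
    (fun t _ => (hderiv t).hasDerivWithinAt) (by simp) (by fun_prop)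
    (fun t _ => (hquad t).hasDerivWithinAt) (fun t ht => hslope t ht.1)
    (right_mem_Icc.2 zero_le_one)

theorem inexact_prox_gradient_step_le {h r : E → ℝ} {G : E → E} {L η : ℝ} {x b u : E}
    (hh : ConvexOn ℝ univ h) (hG : ∀ x, HasGradientAt h (G x) x)
    (hGL : ∀ x y, ‖G x - G y‖ ≤ L * ‖x - y‖) (hr : ConvexOn ℝ univ r) (hη : 0 < η)
    (hLη : L ≤ 1 / (2 * η)) (hu : IsMinOn (proxLinearModel r η x b) univ u) (w : E) :
    h u + r u - (h w + r w) ≤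
      1 / (2 * η) * (‖w - x‖ ^ 2 - ‖w - u‖ ^ 2) + η * ‖G x - b‖ ^ 2 + ⟪G x - b, x - w⟫ := by
  have hdescent := le_add_inner_add_sq_of_lipschitz_gradient hG hGL x u
  have hsupport := hh.add_inner_le_of_hasGradientAt_s19 (hG x) w
  have hprox := three_point_of_isMinOn_proxLinearModel hr hu w
  have hyoung := real_inner_le_mul_norm_sq_add_mul_norm_sq hη
    (le_of_eq (by field_simp) : 1 ≤ 4 * η * (1 / (4 * η))) (G x - b) (u - x)
  have hstep : L / 2 * ‖u - x‖ ^ 2 + 1 / (4 * η) * ‖u - x‖ ^ 2 ≤ 1 / (2 * η) * ‖u - x‖ ^ 2 := by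
    rw [← add_mul, show 1 / (2 * η) = 1 / (2 * η) / 2 + 1 / (4 * η) by field_simp; ring]
    gcongr
  have hsplit : ⟪G x, u - x⟫ - ⟪G x, w - x⟫ =
      ⟪G x - b, u - x⟫ + ⟪G x - b, x - w⟫ + ⟪b, u - w⟫ := by
    simp only [inner_sub_left, inner_sub_right]; ring
  rw [mul_sub, mul_sub] at hprox
  rw [mul_sub]
  linarith

end InnerProductSpace

section Composition

open ContinuousLinearMap

variable {E F : Type*} [NormedAddCommGroup E] [InnerProductSpace ℝ E] [CompleteSpace E]
  [NormedAddCommGroup F] [InnerProductSpace ℝ F] [CompleteSpace F]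

theorem norm_adjoint_apply_le (A : E →L[ℝ] F) (u : F) : ‖adjoint A u‖ ≤ ‖A‖ * ‖u‖ := by
  simpa using (adjoint A).le_opNorm u

theorem HasGradientAt.comp_hasFDerivAt {f : F → ℝ} {G : F} {g : E → F} {A : E →L[ℝ] F} {x : E}
    (hf : HasGradientAt f G (g x)) (hg : HasFDerivAt g A x) :
    HasGradientAt (fun w => f (g w)) (adjoint A G) x := by
  rw [hasGradientAt_iff_hasFDerivAt]
  refine (hf.hasFDerivAt.comp x hg).congr_fderiv ?_
  ext v
  simp [InnerProductSpace.toDual_apply_apply, adjoint_inner_left]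

theorem compositional_gradient_error_le {gradf : F → F} {Cf Lf η μ : ℝ} (hη : 0 ≤ η) (hμ : 0 < μ)
    (hCf : ∀ u, ‖gradf u‖ ≤ Cf) (hLf : ∀ u u', ‖gradf u - gradf u'‖ ≤ Lf * ‖u - u'‖)
    (A z : E →L[ℝ] F) (y₀ y : F) (v : E) :
    η * ‖adjoint A (gradf y₀) - adjoint z (gradf y)‖ ^ 2
        + ⟪adjoint A (gradf y₀) - adjoint z (gradf y), v⟫ ≤
      (2 * η + 1 / μ) * (Lf ^ 2 * ‖z‖ ^ 2 * ‖y - y₀‖ ^ 2) + 2 * η * (Cf ^ 2 * ‖z - A‖ ^ 2)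
        + μ / 4 * ‖v‖ ^ 2 + ⟪gradf y₀, (A - z) v⟫ := by
  set Δ₁ := adjoint z (gradf y₀ - gradf y)
  set Δ₂ := adjoint (A - z) (gradf y₀)
  have hsplit : adjoint A (gradf y₀) - adjoint z (gradf y) = Δ₁ + Δ₂ := by
    simp only [Δ₁, Δ₂, map_sub, sub_apply]; abel
  have hΔ₁ : ‖Δ₁‖ ^ 2 ≤ Lf ^ 2 * ‖z‖ ^ 2 * ‖y - y₀‖ ^ 2 := by
    have : ‖Δ₁‖ ≤ ‖z‖ * (Lf * ‖y₀ - y‖) :=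
      (norm_adjoint_apply_le z _).trans (by gcongr; exact hLf _ _)
    calc ‖Δ₁‖ ^ 2 ≤ (‖z‖ * (Lf * ‖y₀ - y‖)) ^ 2 := by gcongr
      _ = _ := by rw [norm_sub_rev]; ring
  have hΔ₂ : ‖Δ₂‖ ^ 2 ≤ Cf ^ 2 * ‖z - A‖ ^ 2 := by
    have : ‖Δ₂‖ ≤ ‖A - z‖ * Cf := (norm_adjoint_apply_le _ _).trans (by gcongr; exact hCf _)
    calc ‖Δ₂‖ ^ 2 ≤ (‖A - z‖ * Cf) ^ 2 := by gcongr
      _ = _ := by rw [norm_sub_rev]; ring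
  have hyoung := real_inner_le_mul_norm_sq_add_mul_norm_sq (a := 1 / μ) (b := μ / 4)
    (by positivity) (le_of_eq (by field_simp)) Δ₁ v
  have hsq := mul_le_mul_of_nonneg_left (norm_add_sq_le_two_mul Δ₁ Δ₂) hη
  have hΔ₂v : ⟪Δ₂, v⟫ = ⟪gradf y₀, (A - z) v⟫ := adjoint_inner_left _ _ _
  rw [hsplit, inner_add_left, hΔ₂v]
  calc _ ≤ (2 * η + 1 / μ) * ‖Δ₁‖ ^ 2 + 2 * η * ‖Δ₂‖ ^ 2 + μ / 4 * ‖v‖ ^ 2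
        + ⟪gradf y₀, (A - z) v⟫ := by linarith
    _ ≤ _ := by gcongr

theorem compositional_prox_step_le {f : F → ℝ} {gradf : F → F} {g : E → F} {Dg : E → E →L[ℝ] F}
    {r : E → ℝ} {Cf Lf L η μ : ℝ} (hη : 0 < η) (hLη : L ≤ 1 / (2 * η)) (hμ : 0 < μ)
    (hgradf : ∀ u, HasGradientAt f (gradf u) u) (hCf : ∀ u, ‖gradf u‖ ≤ Cf)
    (hLf : ∀ u u', ‖gradf u - gradf u'‖ ≤ Lf * ‖u - u'‖) (hDg : ∀ w, HasFDerivAt g (Dg w) w)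
    (hconv : ConvexOn ℝ univ (fun w => f (g w))) (hrconv : ConvexOn ℝ univ r)
    (hsmooth : ∀ w w', ‖adjoint (Dg w) (gradf (g w)) - adjoint (Dg w') (gradf (g w'))‖
      ≤ L * ‖w - w'‖)
    {x u : E} {z : E →L[ℝ] F} {y : F}
    (hu : IsMinOn (proxLinearModel r η x (adjoint z (gradf y))) univ u) (w : E) :
    f (g u) + r u - (f (g w) + r w) ≤
      1 / (2 * η) * (‖w - x‖ ^ 2 - ‖w - u‖ ^ 2) + μ / 4 * ‖w - x‖ ^ 2
        + (2 * η + 1 / μ) * Lf ^ 2 * (‖z‖ ^ 2 * ‖y - g x‖ ^ 2) + 2 * η * Cf ^ 2 * ‖z - Dg x‖ ^ 2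
        + ⟪gradf (g x), (Dg x - z) (x - w)⟫ := by
  have hstep := inexact_prox_gradient_step_le hconv
    (fun v => (hgradf (g v)).comp_hasFDerivAt (hDg v)) hsmooth hrconv hη hLη hu w
  have herror := compositional_gradient_error_le hη.le hμ hCf hLf (Dg x) z (g x) y (x - w)
  rw [norm_sub_rev x w] at herror
  linarith

end Composition

section Expectation

variable {Ω : Type*} [MeasurableSpace Ω] {μ : Measure Ω}

theorem integrable_norm_sq_of_integrable_norm_sub_sq [IsFiniteMeasure μ] {E : Type*}
    [NormedAddCommGroup E] {Z : Ω → E} (hZ : AEStronglyMeasurable Z μ) (c : E)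
    (h : Integrable (fun ω => ‖Z ω - c‖ ^ 2) μ) : Integrable (fun ω => ‖Z ω‖ ^ 2) μ := by
  have := ((memLp_two_iff_integrable_sq_norm (hZ.sub aestronglyMeasurable_const)).2 h).add
    (memLp_const c)
  simpa using this.integrable_norm_pow two_ne_zero

variable {E F : Type*} [NormedAddCommGroup E] [InnerProductSpace ℝ E]
  [NormedAddCommGroup F] [InnerProductSpace ℝ F]

theorem integrable_inner_sub_apply [IsFiniteMeasure μ] {Z : Ω → E →L[ℝ] F} (hZ : Integrable Z μ)
    (A : E →L[ℝ] F) (u : F) (v : E) : Integrable (fun ω => ⟪u, (A - Z ω) v⟫) μ :=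
  ((innerSL ℝ u).comp (ContinuousLinearMap.apply ℝ F v)).integrable_comp
    ((integrable_const A).sub hZ)

theorem integral_inner_sub_apply_eq_zero [CompleteSpace F] [IsProbabilityMeasure μ]
    {Z : Ω → E →L[ℝ] F} (hZ : Integrable Z μ) (u : F) (v : E) :
    ∫ ω, ⟪u, ((∫ ω', Z ω' ∂μ) - Z ω) v⟫ ∂μ = 0 := by
  have hcomm := ((innerSL ℝ u).comp (ContinuousLinearMap.apply ℝ F v)).integral_comp_comm
    ((integrable_const (∫ ω', Z ω' ∂μ)).sub hZ)
  simp only [ContinuousLinearMap.comp_apply, ContinuousLinearMap.apply_apply, innerSL_apply_apply,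
    Pi.sub_apply] at hcomm
  rw [hcomm, integral_sub (integrable_const _) hZ]
  simp

end Expectation

theorem expected_one_step_compositional_prox_general {d p : ℕ}
    {Ω : Type*} [MeasureSpace Ω] [IsProbabilityMeasure (ℙ : Measure Ω)]
    [MeasurableSpace (EuclideanSpace ℝ (Fin d) →L[ℝ] EuclideanSpace ℝ (Fin p))]
    [BorelSpace (EuclideanSpace ℝ (Fin d) →L[ℝ] EuclideanSpace ℝ (Fin p))]
    (f : EuclideanSpace ℝ (Fin p) → ℝ)
    (gradf : EuclideanSpace ℝ (Fin p) → EuclideanSpace ℝ (Fin p))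
    (g : EuclideanSpace ℝ (Fin d) → EuclideanSpace ℝ (Fin p))
    (Dg : EuclideanSpace ℝ (Fin d) → (EuclideanSpace ℝ (Fin d) →L[ℝ] EuclideanSpace ℝ (Fin p)))
    (r : EuclideanSpace ℝ (Fin d) → ℝ)
    (Cf Lf Cg L η μ σ₀ σ₁ : ℝ) (m : ℕ)
    (hL : 0 < L) (hη : 0 < η) (hηL : η ≤ 1 / (2 * L)) (hμ : 0 < μ)
    (hgradf : ∀ u, HasGradientAt f (gradf u) u)
    (hCf : ∀ u, ‖gradf u‖ ≤ Cf)
    (hLf : ∀ u u', ‖gradf u - gradf u'‖ ≤ Lf * ‖u - u'‖)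
    (hDg : ∀ w, HasFDerivAt g (Dg w) w)
    (hconv : ConvexOn ℝ Set.univ (fun w => f (g w)))
    (hrconv : ConvexOn ℝ Set.univ r)
    (hsmooth : ∀ w w', ‖(ContinuousLinearMap.adjoint (Dg w)) (gradf (g w))
        - (ContinuousLinearMap.adjoint (Dg w')) (gradf (g w'))‖ ≤ L * ‖w - w'‖)
    (wt : EuclideanSpace ℝ (Fin d))
    (yhat : Ω → EuclideanSpace ℝ (Fin p))
    (zhat : Ω → (EuclideanSpace ℝ (Fin d) →L[ℝ] EuclideanSpace ℝ (Fin p)))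
    (w₁ : Ω → EuclideanSpace ℝ (Fin d))
    (hindep : IndepFun yhat zhat ℙ)
    (hint_z : Integrable zhat ℙ)
    (hunbiased_z : ∫ ω, zhat ω ∂ℙ = Dg wt)
    (hmom_y : ∫ ω, ‖yhat ω - g wt‖ ^ 2 ∂ℙ ≤ σ₀ ^ 2 / m)
    (hmom_z : ∫ ω, ‖zhat ω - Dg wt‖ ^ 2 ∂ℙ ≤ σ₁ ^ 2 / m)
    (hmom_z2 : ∫ ω, ‖zhat ω‖ ^ 2 ∂ℙ ≤ Cg ^ 2)
    (hint_y2 : Integrable (fun ω => ‖yhat ω - g wt‖ ^ 2) ℙ)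
    (hint_z2 : Integrable (fun ω => ‖zhat ω - Dg wt‖ ^ 2) ℙ)
    (hmin : ∀ ω (v : EuclideanSpace ℝ (Fin d)),
      ⟪(ContinuousLinearMap.adjoint (zhat ω)) (gradf (yhat ω)), w₁ ω⟫
          + 1 / (2 * η) * ‖w₁ ω - wt‖ ^ 2 + r (w₁ ω)
        ≤ ⟪(ContinuousLinearMap.adjoint (zhat ω)) (gradf (yhat ω)), v⟫
          + 1 / (2 * η) * ‖v - wt‖ ^ 2 + r v)
    (hint_F : ∀ v : EuclideanSpace ℝ (Fin d),
      Integrable (fun ω => f (g (w₁ ω)) + r (w₁ ω) - (f (g v) + r v)) ℙ)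
    (hint_dist : ∀ v : EuclideanSpace ℝ (Fin d),
      Integrable (fun ω => ‖v - w₁ ω‖ ^ 2) ℙ) :
    ∀ w : EuclideanSpace ℝ (Fin d),
      (∫ ω, (f (g (w₁ ω)) + r (w₁ ω) - (f (g w) + r w)) ∂ℙ)
        ≤ 1 / (2 * η) * (‖w - wt‖ ^ 2 - ∫ ω, ‖w - w₁ ω‖ ^ 2 ∂ℙ)
          + μ / 4 * ‖w - wt‖ ^ 2
          + 2 * η * Cf ^ 2 * σ₁ ^ 2 / m
          + 2 * η * Cg ^ 2 * Lf ^ 2 * σ₀ ^ 2 / m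
          + Cg ^ 2 * Lf ^ 2 * σ₀ ^ 2 / (μ * m) := by
  intro w
  have hLη : L ≤ 1 / (2 * η) := by rw [le_div_iff₀ (by positivity)] at hηL ⊢; linarith
  have hstep (ω : Ω) := compositional_prox_step_le hη hLη hμ hgradf hCf hLf hDg hconv hrconv
    hsmooth (isMinOn_univ_iff.2 (hmin ω)) w
  have hz2 := integrable_norm_sq_of_integrable_norm_sub_sq hint_z.aestronglyMeasurable _ hint_z2
  have hind : IndepFun (fun ω => ‖zhat ω‖ ^ 2) (fun ω => ‖yhat ω - g wt‖ ^ 2) ℙ :=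
    hindep.symm.comp (φ := fun A => ‖A‖ ^ 2) (ψ := fun y => ‖y - g wt‖ ^ 2)
      (by fun_prop) (by fun_prop)
  have hprod : Integrable (fun ω => ‖zhat ω‖ ^ 2 * ‖yhat ω - g wt‖ ^ 2) ℙ :=
    hind.integrable_mul hz2 hint_y2
  have hbias := integrable_inner_sub_apply hint_z (Dg wt) (gradf (g wt)) (wt - w)
  have hunbias := integral_inner_sub_apply_eq_zero hint_z (gradf (g wt)) (wt - w)
  rw [hunbiased_z] at hunbias
  have hdist := hint_dist w
  calc _ ≤ ∫ ω, (1 / (2 * η) * (‖w - wt‖ ^ 2 - ‖w - w₁ ω‖ ^ 2) + μ / 4 * ‖w - wt‖ ^ 2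
        + (2 * η + 1 / μ) * Lf ^ 2 * (‖zhat ω‖ ^ 2 * ‖yhat ω - g wt‖ ^ 2)
        + 2 * η * Cf ^ 2 * ‖zhat ω - Dg wt‖ ^ 2
        + ⟪gradf (g wt), (Dg wt - zhat ω) (wt - w)⟫) ∂ℙ :=
      integral_mono (hint_F w) (by fun_prop) hstep
    _ = 1 / (2 * η) * (‖w - wt‖ ^ 2 - ∫ ω, ‖w - w₁ ω‖ ^ 2 ∂ℙ) + μ / 4 * ‖w - wt‖ ^ 2
        + (2 * η + 1 / μ) * Lf ^ 2 * ((∫ ω, ‖zhat ω‖ ^ 2 ∂ℙ) * ∫ ω, ‖yhat ω - g wt‖ ^ 2 ∂ℙ)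
        + 2 * η * Cf ^ 2 * ∫ ω, ‖zhat ω - Dg wt‖ ^ 2 ∂ℙ := by
      rw [integral_add (by fun_prop) hbias, integral_add (by fun_prop) (by fun_prop),
        integral_add (by fun_prop) (by fun_prop), integral_add (by fun_prop) (by fun_prop),
        hunbias, integral_const_mul, integral_sub (by fun_prop) hdist, integral_const_mul,
        integral_const_mul, integral_const_mul,
        hind.integral_fun_mul_eq_mul_integral hz2.1 hint_y2.1]
      simp
    _ ≤ _ := by
      have := mul_le_mul hmom_z2 hmom_y (integral_nonneg fun _ => by positivity) (sq_nonneg Cg)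
      grw [this, hmom_z]
      apply le_of_eq
      ring

/-- Expected one-step bound for the biased compositional proximal gradient step.
With `F = f∘g + r`, `f∘g` convex and `L`-smooth, `η ≤ 1/(2L)`, and
`w₁ = argmin_w ⟨ẑᵀ∇f(ŷ), w⟩ + (1/(2η))‖w − wₜ‖² + r(w)` where `ŷ, ẑ` are independent unbiased
estimators of `g(wₜ)` and `∇g(wₜ)` with `E‖ŷ − g(wₜ)‖² ≤ σ₀²/m`, `E‖ẑ − ∇g(wₜ)‖² ≤ σ₁²/m`,
`E‖ẑ‖² ≤ C_g²`, `‖∇f‖ ≤ C_f` and `∇f` `L_f`-Lipschitz, then for any fixed `w`: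
`E[F(w₁) − F(w)] ≤ (1/(2η))(E‖w − wₜ‖² − E‖w − w₁‖²) + (μ/4)E‖w − wₜ‖²
  + 2η C_f² σ₁²/m + 2η C_g² L_f² σ₀²/m + C_g² L_f² σ₀²/(μ m)`. -/
theorem expected_one_step_compositional_prox {d p : ℕ}
    {Ω : Type*} [MeasureSpace Ω] [IsProbabilityMeasure (ℙ : Measure Ω)]
    [MeasurableSpace (EuclideanSpace ℝ (Fin d) →L[ℝ] EuclideanSpace ℝ (Fin p))]
    [BorelSpace (EuclideanSpace ℝ (Fin d) →L[ℝ] EuclideanSpace ℝ (Fin p))]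
    (f : EuclideanSpace ℝ (Fin p) → ℝ)
    (gradf : EuclideanSpace ℝ (Fin p) → EuclideanSpace ℝ (Fin p))
    (g : EuclideanSpace ℝ (Fin d) → EuclideanSpace ℝ (Fin p))
    (Dg : EuclideanSpace ℝ (Fin d) → (EuclideanSpace ℝ (Fin d) →L[ℝ] EuclideanSpace ℝ (Fin p)))
    (r : EuclideanSpace ℝ (Fin d) → ℝ)
    (Cf Lf Cg L η μ σ₀ σ₁ : ℝ) (m : ℕ) (hm : 0 < m)
    (hL : 0 < L) (hη : 0 < η) (hηL : η ≤ 1 / (2 * L)) (hμ : 0 < μ)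
    (hgradf : ∀ u, HasGradientAt f (gradf u) u)
    (hCf : ∀ u, ‖gradf u‖ ≤ Cf)
    (hLf : ∀ u u', ‖gradf u - gradf u'‖ ≤ Lf * ‖u - u'‖)
    (hDg : ∀ w, HasFDerivAt g (Dg w) w)
    (hconv : ConvexOn ℝ Set.univ (fun w => f (g w)))
    (hrconv : ConvexOn ℝ Set.univ r)
    (hsmooth : ∀ w w', ‖(ContinuousLinearMap.adjoint (Dg w)) (gradf (g w))
        - (ContinuousLinearMap.adjoint (Dg w')) (gradf (g w'))‖ ≤ L * ‖w - w'‖)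
    (wt : EuclideanSpace ℝ (Fin d))
    (yhat : Ω → EuclideanSpace ℝ (Fin p))
    (zhat : Ω → (EuclideanSpace ℝ (Fin d) →L[ℝ] EuclideanSpace ℝ (Fin p)))
    (w₁ : Ω → EuclideanSpace ℝ (Fin d))
    (hmeas_y : Measurable yhat) (hmeas_z : Measurable zhat)
    (hindep : IndepFun yhat zhat ℙ)
    (hint_y : Integrable yhat ℙ) (hint_z : Integrable zhat ℙ)
    (hunbiased_y : ∫ ω, yhat ω ∂ℙ = g wt)
    (hunbiased_z : ∫ ω, zhat ω ∂ℙ = Dg wt)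
    (hmom_y : ∫ ω, ‖yhat ω - g wt‖ ^ 2 ∂ℙ ≤ σ₀ ^ 2 / m)
    (hmom_z : ∫ ω, ‖zhat ω - Dg wt‖ ^ 2 ∂ℙ ≤ σ₁ ^ 2 / m)
    (hmom_z2 : ∫ ω, ‖zhat ω‖ ^ 2 ∂ℙ ≤ Cg ^ 2)
    (hint_y2 : Integrable (fun ω => ‖yhat ω - g wt‖ ^ 2) ℙ)
    (hint_z2 : Integrable (fun ω => ‖zhat ω - Dg wt‖ ^ 2) ℙ)
    (hmin : ∀ ω (v : EuclideanSpace ℝ (Fin d)),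
      ⟪(ContinuousLinearMap.adjoint (zhat ω)) (gradf (yhat ω)), w₁ ω⟫
          + 1 / (2 * η) * ‖w₁ ω - wt‖ ^ 2 + r (w₁ ω)
        ≤ ⟪(ContinuousLinearMap.adjoint (zhat ω)) (gradf (yhat ω)), v⟫
          + 1 / (2 * η) * ‖v - wt‖ ^ 2 + r v)
    (hint_F : ∀ v : EuclideanSpace ℝ (Fin d),
      Integrable (fun ω => f (g (w₁ ω)) + r (w₁ ω) - (f (g v) + r v)) ℙ)
    (hint_dist : ∀ v : EuclideanSpace ℝ (Fin d),
      Integrable (fun ω => ‖v - w₁ ω‖ ^ 2) ℙ) :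
    ∀ w : EuclideanSpace ℝ (Fin d),
      (∫ ω, (f (g (w₁ ω)) + r (w₁ ω) - (f (g w) + r w)) ∂ℙ)
        ≤ 1 / (2 * η) * (‖w - wt‖ ^ 2 - ∫ ω, ‖w - w₁ ω‖ ^ 2 ∂ℙ)
          + μ / 4 * ‖w - wt‖ ^ 2
          + 2 * η * Cf ^ 2 * σ₁ ^ 2 / m
          + 2 * η * Cg ^ 2 * Lf ^ 2 * σ₀ ^ 2 / m
          + Cg ^ 2 * Lf ^ 2 * σ₀ ^ 2 / (μ * m) :=
  expected_one_step_compositional_prox_general f gradf g Dg r Cf Lf Cg L η μ σ₀ σ₁ m hL hη hηL hμ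
    hgradf hCf hLf hDg hconv hrconv hsmooth wt yhat zhat w₁ hindep hint_z hunbiased_z hmom_y hmom_z
    hmom_z2 hint_y2 hint_z2 hmin hint_F hint_dist
end
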